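/- arXiv:1302.4707 — 2 statements merged into one kernel-verified Lean document; each statement's English description precedes it below -/
import Mathlib

section
/- Let G = (V,E) be a finite simple graph. For each edge e ∈ E let m_e be an even natural number, and let G' be the graph obtained from G by subdividing each edge e = {u,v} into m_e + 1 edges, i.e., replacing e by a path u, x_{e,1}, …, x_{e,m_e}, v through m_e new vertices (so every edge is subdivided into an odd number of pieces). Let m = ∑_{e∈E} m_e be the total number of added vertices. Then the maximum size of an independent set in G' equals the maximum size of an independent set in G plus m/2. -/
/-!
A path whose `m` internal vertices (`m` even) are attached to two end vertices has `m / 2`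
pairwise non-adjacent internal vertices at most, and only `m / 2 - 1` if both end vertices are
taken. So for an independent set `T` of the subdivision, deleting one endpoint of every edge with
both endpoints in `T` makes `T ∩ V` independent in `G`, and each deleted vertex is paid for by a
vertex missing on that edge's path: `|T| ≤ α(G) + ∑ m_e / 2`. Conversely, a maximum independent
set `s` of `G` extends by every other internal vertex of each path, starting next to an endpoint
outside `s`.
-/

open scoped Classical

noncomputable section

/-- The maximum size of an independent set in a graph. -/
def maxIndepSetSize {V : Type*} (G : SimpleGraph V) : ℕ :=
  sSup {n | ∃ s : Finset V, (∀ u ∈ s, ∀ v ∈ s, ¬ G.Adj u v) ∧ s.card = n}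

/-- The adjacency relation of the graph obtained from `G` by subdividing each edge `e`
(with endpoints given by `ends`) into `m e + 1` pieces, through `m e` new vertices.
The new vertices for edge `e` are `(e, 0), …, (e, m e - 1)`, forming a path joined to
the first endpoint of `e` at index `0` and to the second endpoint at index `m e - 1`;
the original edge is removed (it only survives, as is, when `m e = 0`). -/
def SubdivAdj {V : Type*} (G : SimpleGraph V) (m : Sym2 V → ℕ) (ends : Sym2 V → V × V) :
    (V ⊕ Σ e : G.edgeSet, Fin (m e.1)) → (V ⊕ Σ e : G.edgeSet, Fin (m e.1)) → Prop
  | Sum.inl u, Sum.inl v => G.Adj u v ∧ m s(u, v) = 0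
  | Sum.inl u, Sum.inr ⟨e, i⟩ =>
      (u = (ends e.1).1 ∧ (i : ℕ) = 0) ∨ (u = (ends e.1).2 ∧ (i : ℕ) + 1 = m e.1)
  | Sum.inr ⟨e, i⟩, Sum.inl u =>
      (u = (ends e.1).1 ∧ (i : ℕ) = 0) ∨ (u = (ends e.1).2 ∧ (i : ℕ) + 1 = m e.1)
  | Sum.inr ⟨e, i⟩, Sum.inr ⟨e', j⟩ =>
      e.1 = e'.1 ∧ ((i : ℕ) + 1 = (j : ℕ) ∨ (j : ℕ) + 1 = (i : ℕ))

open Finset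

namespace SimpleGraph

variable {V : Type*} {G : SimpleGraph V}

theorem IsIndepSet.not_adj {s : Set V} (hs : G.IsIndepSet s) {u v : V} (hu : u ∈ s)
    (hv : v ∈ s) : ¬ G.Adj u v :=
  fun huv => hs hu hv huv.ne huv

theorem isIndepSet_iff_forall_not_adj {s : Set V} :
    G.IsIndepSet s ↔ ∀ u ∈ s, ∀ v ∈ s, ¬ G.Adj u v :=
  ⟨fun hs _ hu _ hv => hs.not_adj hu hv, fun h _ hu _ hv _ => h _ hu _ hv⟩

theorem card_le_indepNum_add_card [Finite V] [DecidableEq V] (s : Finset V) (B : Finset G.edgeSet)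
    (hB : ∀ u ∈ s, ∀ v ∈ s, ∀ h : G.Adj u v, ⟨s(u, v), h⟩ ∈ B) :
    #s ≤ G.indepNum + #B := by
  set F := B.image fun e => e.1.out.1
  have hindep : G.IsIndepSet ↑(s \ F) := by
    rw [isIndepSet_iff_forall_not_adj]
    intro u hu v hv huv
    simp only [coe_sdiff, Set.mem_sdiff, mem_coe] at hu hv
    have hF : (s(u, v)).out.1 ∈ F :=
      mem_image.2 ⟨⟨s(u, v), huv⟩, hB u hu.1 v hv.1 huv, rfl⟩
    rcases Sym2.mem_iff.1 (Sym2.out_fst_mem s(u, v)) with h | h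
    · exact hu.2 (h ▸ hF)
    · exact hv.2 (h ▸ hF)
  calc #s ≤ #(s \ F) + #F := card_le_card_sdiff_add_card
    _ ≤ G.indepNum + #B := add_le_add hindep.card_le_indepNum card_image_le

end SimpleGraph

theorem maxIndepSetSize_eq_indepNum {V : Type*} (G : SimpleGraph V) :
    maxIndepSetSize G = G.indepNum := by
  unfold maxIndepSetSize SimpleGraph.indepNum
  simp only [SimpleGraph.isNIndepSet_iff, SimpleGraph.isIndepSet_iff_forall_not_adj, mem_coe]

theorem Finset.card_le_of_subset_Ico_of_add_one_notMem {S : Finset ℕ} {a n : ℕ}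
    (hS : S ⊆ Ico a (a + n)) (h : ∀ i ∈ S, i + 1 ∉ S) : #S ≤ (n + 1) / 2 := by
  -- distinct elements of `S` lie in distinct blocks `{a + 2k, a + 2k + 1}`
  refine (card_le_card_of_injOn (fun i => (i - a) / 2) (t := range ((n + 1) / 2)) ?_ ?_).trans
    (card_range _).le
  · intro i hi
    have := mem_Ico.1 (hS hi)
    simp only [coe_range, Set.mem_Iio]
    omega
  · intro i hi j hj hij
    have := mem_Ico.1 (hS hi)
    have := mem_Ico.1 (hS hj)
    have : i + 1 ≠ j := fun hij => h i hi (hij ▸ hj)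
    have : j + 1 ≠ i := fun hji => h j hj (hji ▸ hi)
    simp only at hij
    omega

theorem Fin.card_filter_mod_two_eq {n r : ℕ} (hn : Even n) (hr : r < 2) :
    #{i : Fin n | (i : ℕ) % 2 = r} = n / 2 := by
  have h := Nat.count_modEq_card n two_pos r
  rw [Nat.count_eq_card_filter_range] at h
  rw [← card_map Fin.valEmbedding]
  convert h using 2
  · ext i
    simp only [mem_map, mem_filter, mem_univ, true_and, Fin.valEmbedding_apply, mem_range,
      Nat.ModEq, Nat.mod_eq_of_lt hr]
    constructor
    · rintro ⟨a, ha, rfl⟩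
      exact ⟨a.2, ha⟩
    · rintro ⟨hi, hmod⟩
      exact ⟨⟨i, hi⟩, hmod, rfl⟩
  · simp [Nat.even_iff.1 hn]

section Subdivision

variable {V : Type*} {G : SimpleGraph V} {m : Sym2 V → ℕ} {ends : Sym2 V → V × V}
  {G' : SimpleGraph (V ⊕ Σ e : G.edgeSet, Fin (m e.1))}

theorem adj_ends (hends : ∀ e ∈ G.edgeSet, s((ends e).1, (ends e).2) = e)
    (e : G.edgeSet) : G.Adj (ends e.1).1 (ends e.1).2 := by
  rw [← SimpleGraph.mem_edgeSet, hends e.1 e.2]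
  exact e.2

def subdivPathPart [DecidableEq V] (T : Finset (V ⊕ Σ e : G.edgeSet, Fin (m e.1)))
    (e : G.edgeSet) : Finset (Fin (m e.1)) :=
  {i | Sum.inr ⟨e, i⟩ ∈ T}

theorem card_subdivPathPart_add_le [DecidableEq V] (hm : ∀ e ∈ G.edgeSet, Even (m e))
    (hends : ∀ e ∈ G.edgeSet, s((ends e).1, (ends e).2) = e)
    (hAdj : ∀ x y, G'.Adj x y ↔ SubdivAdj G m ends x y)
    {T : Finset (V ⊕ Σ e : G.edgeSet, Fin (m e.1))} (hT : G'.IsIndepSet T) (e : G.edgeSet) :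
    #(subdivPathPart T e) +
        (if Sum.inl (ends e.1).1 ∈ T ∧ Sum.inl (ends e.1).2 ∈ T then 1 else 0) ≤
      m e.1 / 2 := by
  have hT' : ∀ x ∈ T, ∀ y ∈ T, ¬ SubdivAdj G m ends x y :=
    fun x hx y hy hxy => hT.not_adj hx hy ((hAdj x y).2 hxy)
  set S := (subdivPathPart T e).map Fin.valEmbedding
  have hmemS : ∀ i ∈ S, ∃ h : i < m e.1, Sum.inr ⟨e, ⟨i, h⟩⟩ ∈ T := by
    intro i hi
    obtain ⟨i, hi', rfl⟩ := mem_map.1 hi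
    exact ⟨i.2, (mem_filter.1 hi').2⟩
  have hS : ∀ i ∈ S, i + 1 ∉ S := by
    intro i hi hi1
    obtain ⟨_, hiT⟩ := hmemS i hi
    obtain ⟨_, hi1T⟩ := hmemS (i + 1) hi1
    exact hT' _ hiT _ hi1T ⟨rfl, Or.inl rfl⟩
  have hcardS : #S = #(subdivPathPart T e) := card_map _
  obtain ⟨k, hk⟩ := hm e e.2
  split_ifs with hboth
  · obtain ⟨h₁, h₂⟩ := hboth
    -- an edge without new vertices survives in `G'`
    have hm0 : m e.1 ≠ 0 := fun h0 =>
      hT' _ h₁ _ h₂ ⟨adj_ends hends e, by rwa [hends e.1 e.2]⟩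
    have hSIco : S ⊆ Ico 1 (1 + (m e.1 - 2)) := by
      intro i hi
      obtain ⟨hlt, hiT⟩ := hmemS i hi
      have : i ≠ 0 := fun h0 => hT' _ h₁ _ hiT (Or.inl ⟨rfl, h0⟩)
      have : i + 1 ≠ m e.1 := fun htop => hT' _ h₂ _ hiT (Or.inr ⟨rfl, htop⟩)
      rw [mem_Ico]
      omega
    have := card_le_of_subset_Ico_of_add_one_notMem hSIco hS
    omega
  · have hSIco : S ⊆ Ico 0 (0 + m e.1) := fun i hi =>
      mem_Ico.2 ⟨Nat.zero_le i, by simpa using (hmemS i hi).1⟩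
    have := card_le_of_subset_Ico_of_add_one_notMem hSIco hS
    omega

theorem card_le_indepNum_add_sum [Fintype V] [DecidableEq V] [DecidableRel G.Adj]
    (hm : ∀ e ∈ G.edgeSet, Even (m e))
    (hends : ∀ e ∈ G.edgeSet, s((ends e).1, (ends e).2) = e)
    (hAdj : ∀ x y, G'.Adj x y ↔ SubdivAdj G m ends x y)
    {T : Finset (V ⊕ Σ e : G.edgeSet, Fin (m e.1))} (hT : G'.IsIndepSet T) :
    #T ≤ G.indepNum + ∑ e : G.edgeSet, m e.1 / 2 := by
  set inside : Finset G.edgeSet := {e | Sum.inl (ends e.1).1 ∈ T ∧ Sum.inl (ends e.1).2 ∈ T}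
  have hsplit : #T ≤ #T.toLeft + ∑ e, #(subdivPathPart T e) := by
    rw [← card_sigma, ← card_disjSum]
    refine card_le_card ?_
    rintro (v | ⟨e, i⟩) hx <;> simpa [subdivPathPart] using hx
  have hleft : #T.toLeft ≤ G.indepNum + #inside := by
    refine G.card_le_indepNum_add_card _ _ fun u hu v hv huv => ?_
    rw [mem_toLeft] at hu hv
    rcases Sym2.eq_iff.1 (hends s(u, v) huv) with ⟨h₁, h₂⟩ | ⟨h₁, h₂⟩ <;>
      simp [inside, h₁, h₂, hu, hv]
  have hpaths : ∑ e, #(subdivPathPart T e) + #inside ≤ ∑ e : G.edgeSet, m e.1 / 2 := by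
    rw [← Nat.cast_id #inside, ← sum_boole, ← sum_add_distrib]
    exact sum_le_sum fun e _ => card_subdivPathPart_add_le hm hends hAdj hT e
  omega

theorem indepNum_add_sum_le [Fintype V] [DecidableEq V] [DecidableRel G.Adj]
    (hm : ∀ e ∈ G.edgeSet, Even (m e))
    (hends : ∀ e ∈ G.edgeSet, s((ends e).1, (ends e).2) = e)
    (hAdj : ∀ x y, G'.Adj x y ↔ SubdivAdj G m ends x y) :
    G.indepNum + ∑ e : G.edgeSet, m e.1 / 2 ≤ G'.indepNum := by
  obtain ⟨s, hs⟩ := G.exists_isNIndepSet_indepNum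
  -- every other new vertex of each path, starting next to an endpoint outside `s`
  let r : G.edgeSet → ℕ := fun e => if (ends e.1).2 ∈ s then 0 else 1
  have hr : ∀ e, r e < 2 := fun e => by dsimp only [r]; split_ifs <;> omega
  set T := s.disjSum (univ.sigma fun e => ({i | (i : ℕ) % 2 = r e} : Finset (Fin (m e.1))))
  have hend : ∀ a ∈ s, ∀ e (i : Fin (m e.1)), (i : ℕ) % 2 = r e →
      ¬ SubdivAdj G m ends (Sum.inl a) (Sum.inr ⟨e, i⟩) := by
    rintro a ha e i hi (⟨rfl, h0⟩ | ⟨rfl, htop⟩)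
    · have h₂ : (ends e.1).2 ∈ s := by
        by_contra h₂
        simp only [r, if_neg h₂] at hi
        omega
      exact hs.isIndepSet.not_adj ha h₂ (adj_ends hends e)
    · simp only [r, if_pos ha] at hi
      obtain ⟨k, hk⟩ := hm e e.2
      omega
  have hT : G'.IsIndepSet T := by
    rw [SimpleGraph.isIndepSet_iff_forall_not_adj]
    rintro (a | ⟨e, i⟩) hx (b | ⟨e', j⟩) hy hxy <;> rw [hAdj] at hxy <;>
      simp only [mem_coe, T, inl_mem_disjSum, inr_mem_disjSum, mem_sigma, mem_univ, mem_filter,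
        true_and] at hx hy
    · exact hs.isIndepSet.not_adj hx hy hxy.1
    · exact hend a hx e' j hy hxy
    · exact hend b hy e i hx hxy
    · obtain ⟨he, hij⟩ := hxy
      obtain rfl : e = e' := Subtype.ext he
      omega
  calc G.indepNum + ∑ e : G.edgeSet, m e.1 / 2 = #T := by
        rw [card_disjSum, card_sigma, hs.card_eq]
        exact congrArg _ <| sum_congr rfl fun e _ =>
          (Fin.card_filter_mod_two_eq (hm e e.2) (hr e)).symm
    _ ≤ G'.indepNum := hT.card_le_indepNum

end Subdivision

theorem maxIndepSetSize_subdivision_general {V : Type*} [Fintype V]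
    (G : SimpleGraph V) [DecidableRel G.Adj]
    (m : Sym2 V → ℕ) (hm : ∀ e ∈ G.edgeSet, Even (m e))
    (ends : Sym2 V → V × V)
    (hends : ∀ e ∈ G.edgeSet, s((ends e).1, (ends e).2) = e)
    (G' : SimpleGraph (V ⊕ Σ e : G.edgeSet, Fin (m e.1)))
    (hAdj : ∀ x y, G'.Adj x y ↔ SubdivAdj G m ends x y) :
    maxIndepSetSize G' = maxIndepSetSize G + (∑ e ∈ G.edgeFinset, m e) / 2 := by
  have hsum : (∑ e ∈ G.edgeFinset, m e) / 2 = ∑ e : G.edgeSet, m e.1 / 2 := by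
    rw [sum_subtype G.edgeFinset (fun _ => SimpleGraph.mem_edgeFinset) m]
    refine Nat.div_eq_of_eq_mul_left two_pos ?_
    rw [sum_mul]
    exact sum_congr rfl fun e _ => (Nat.div_mul_cancel (even_iff_two_dvd.1 (hm e e.2))).symm
  rw [maxIndepSetSize_eq_indepNum, maxIndepSetSize_eq_indepNum, hsum]
  refine le_antisymm ?_ (indepNum_add_sum_le hm hends hAdj)
  obtain ⟨T, hT, hcard⟩ := G'.exists_isNIndepSet_indepNum
  exact hcard ▸ card_le_indepNum_add_sum hm hends hAdj hT

/-- Observation 1: subdividing every edge of `G` into an odd number of pieces, by adding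
an even number `m e` of new vertices on edge `e`, increases the maximum independent set
size by exactly half the total number `∑ e, m e` of added vertices. -/
theorem maxIndepSetSize_subdivision {V : Type*} [Fintype V] [DecidableEq V]
    (G : SimpleGraph V) [DecidableRel G.Adj]
    (m : Sym2 V → ℕ) (hm : ∀ e ∈ G.edgeSet, Even (m e))
    (ends : Sym2 V → V × V)
    (hends : ∀ e ∈ G.edgeSet, s((ends e).1, (ends e).2) = e)
    (G' : SimpleGraph (V ⊕ Σ e : G.edgeSet, Fin (m e.1)))
    (hAdj : ∀ x y, G'.Adj x y ↔ SubdivAdj G m ends x y) :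
    maxIndepSetSize G' = maxIndepSetSize G + (∑ e ∈ G.edgeFinset, m e) / 2 :=
  maxIndepSetSize_subdivision_general G m hm ends hends G' hAdj
end
end

section
/- Let β ≥ 1 and let 𝒟 be a finite family of β-fat unit regions in ℝ² with ply at most Δ. Let D ∈ 𝒟 and let p, q be any two points of D. Then there exists a subset S ⊆ 𝒟 with |S| ≤ (2β+1)²·Δ such that p and q lie in the same path-connected component of ℝ² \ ⋃(𝒟 \ S); i.e., the resilience between p and q with respect to 𝒟 is at most (2β+1)²·Δ. -/
open Metric
open scoped Classical

noncomputable section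

/-- The plane ℝ². -/
abbrev Plane := EuclideanSpace ℝ (Fin 2)

/-- The number of visits of a path `π` to a region `D`: the number of connected
components of the preimage `π⁻¹(D)`. -/
def visits {p q : Plane} (π : Path p q) (D : Set Plane) : ℕ :=
  Nat.card (ConnectedComponents ((⇑π) ⁻¹' D : Set unitInterval))

/-- The thickness of a path with respect to a family of regions. -/
def pathThickness (𝒟 : Finset (Set Plane)) {p q : Plane} (π : Path p q) : ℕ :=
  ∑ D ∈ 𝒟, visits π D

/-- The thickness `t(p,q)`: the minimum thickness over all paths from `p` to `q`. -/
def thickness (𝒟 : Finset (Set Plane)) (p q : Plane) : ℕ :=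
  sInf {n | ∃ π : Path p q, pathThickness 𝒟 π = n}

/-- The resilience `r(p,q)`: the minimum number of regions of `𝒟` to remove so that `p`
and `q` are in the same path-connected component of the complement of the rest. -/
def resilience (𝒟 : Finset (Set Plane)) (p q : Plane) : ℕ :=
  sInf {n | ∃ S ⊆ 𝒟, S.card = n ∧ JoinedIn (⋃₀ (↑(𝒟 \ S) : Set (Set Plane)))ᶜ p q}

/-- The resilience of a path: the number of regions of `𝒟` it intersects. -/
def pathResilience (𝒟 : Finset (Set Plane)) {p q : Plane} (π : Path p q) : ℕ :=
  {D | D ∈ 𝒟 ∧ ∃ s, π s ∈ D}.ncard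

/-- Two points are well-separated if their distance is at least `2√3`. -/
def WellSeparated (p q : Plane) : Prop := 2 * Real.sqrt 3 ≤ dist p q

/-- A `β`-fat unit region: a compact connected set squeezed between concentric balls of
radii `1` and `β`. -/
def IsFatUnitRegion (β : ℝ) (D : Set Plane) : Prop :=
  IsCompact D ∧ IsConnected D ∧ ∃ c : Plane, closedBall c 1 ⊆ D ∧ D ⊆ closedBall c β

/-! Remove the regions that meet the ball `closedBall c β` containing `D`: the remaining regions
miss this convex ball, inside which the segment from `p` to `q` runs. Each removed region contains
a unit ball lying in `closedBall c (2β + 1)`, and these unit balls cover every point at most `Δ`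
times, so comparing areas bounds their number by `(2β + 1)² Δ`. -/

open MeasureTheory Measure Finset Module
open scoped ENNReal

theorem MeasureTheory.sum_measure_le_mul_measure_of_card_mem_le {α ι : Type*}
    [MeasurableSpace α] (μ : Measure α) {s : Finset ι} {A : ι → Set α} {K : Set α} {Δ : ℕ}
    (hA : ∀ i ∈ s, MeasurableSet (A i)) (hAK : ∀ i ∈ s, A i ⊆ K) (hK : MeasurableSet K)
    (hply : ∀ x, #{i ∈ s | x ∈ A i} ≤ Δ) :
    ∑ i ∈ s, μ (A i) ≤ Δ * μ K := by
  have hpt : ∀ x, ∑ i ∈ s, (A i).indicator 1 x ≤ K.indicator (fun _ => (Δ : ℝ≥0∞)) x := by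
    intro x
    by_cases hx : x ∈ K
    · simp only [Set.indicator_of_mem hx, Set.indicator_apply, Pi.one_apply, sum_boole]
      exact_mod_cast hply x
    · rw [Set.indicator_of_notMem hx]
      exact (sum_eq_zero fun i hi => Set.indicator_of_notMem (fun hxi => hx (hAK i hi hxi)) _).le
  calc ∑ i ∈ s, μ (A i) = ∫⁻ x, ∑ i ∈ s, (A i).indicator 1 x ∂μ := by
        rw [lintegral_finsetSum _ fun i hi => measurable_one.indicator (hA i hi)]
        exact sum_congr rfl fun i hi => (lintegral_indicator_one (hA i hi)).symm
    _ ≤ ∫⁻ x, K.indicator (fun _ => (Δ : ℝ≥0∞)) x ∂μ := lintegral_mono hpt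
    _ = Δ * μ K := lintegral_indicator_const hK _

theorem card_le_pow_finrank_mul_of_closedBall_subset {E ι : Type*} [NormedAddCommGroup E]
    [NormedSpace ℝ E] [FiniteDimensional ℝ E] {s : Finset ι} {x : ι → E} {c : E} {R : ℝ}
    {Δ : ℕ} (hR : 0 ≤ R) (hx : ∀ i ∈ s, closedBall (x i) 1 ⊆ closedBall c R)
    (hply : ∀ y, #{i ∈ s | y ∈ closedBall (x i) 1} ≤ Δ) :
    (#s : ℝ) ≤ R ^ finrank ℝ E * Δ := by
  borelize E
  let μ : Measure E := Measure.addHaar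
  have hpack := sum_measure_le_mul_measure_of_card_mem_le μ (fun i _ => measurableSet_closedBall)
    hx measurableSet_closedBall hply
  rw [sum_congr rfl fun i _ => addHaar_closedBall' μ (x i) zero_le_one, addHaar_closedBall' μ c hR,
    sum_const, nsmul_eq_mul, one_pow, ENNReal.ofReal_one, one_mul, ← mul_assoc] at hpack
  rw [ENNReal.mul_le_mul_iff_left (measure_closedBall_pos μ 0 one_pos).ne'
    measure_closedBall_lt_top.ne] at hpack
  rw [← ENNReal.ofReal_le_ofReal_iff (by positivity), ENNReal.ofReal_mul (by positivity)]
  simpa [mul_comm] using hpack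

theorem subset_compl_sUnion_sdiff_filter_inter_nonempty {α : Type*} (𝒟 : Finset (Set α))
    (K : Set α) : K ⊆ (⋃₀ ↑(𝒟 \ {D ∈ 𝒟 | (D ∩ K).Nonempty}))ᶜ := by
  rintro x hxK ⟨D, hD, hxD⟩
  rw [coe_sdiff, Set.mem_sdiff, mem_coe, mem_coe, mem_filter] at hD
  exact hD.2 ⟨hD.1, x, hxD, hxK⟩

/-- Lemma (fat regions): inside a `β`-fat unit region of a family of ply at most `Δ`,
any two points have resilience at most `(2β+1)²·Δ`. -/
theorem resilience_inside_fat_region_le_ply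
    (β : ℝ) (hβ : 1 ≤ β) (Δ : ℕ)
    (𝒟 : Finset (Set Plane)) (hfat : ∀ D ∈ 𝒟, IsFatUnitRegion β D)
    (hply : ∀ x : Plane, {D | D ∈ 𝒟 ∧ x ∈ D}.ncard ≤ Δ)
    (D : Set Plane) (hD : D ∈ 𝒟) (p q : Plane) (hp : p ∈ D) (hq : q ∈ D) :
    ∃ S ⊆ 𝒟, (S.card : ℝ) ≤ (2 * β + 1) ^ 2 * (Δ : ℝ) ∧
      JoinedIn (⋃₀ (↑(𝒟 \ S) : Set (Set Plane)))ᶜ p q := by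
  obtain ⟨-, -, c, -, hDc⟩ := hfat D hD
  choose! ctr hctr_sub hsub_ctr using fun D' (hD' : D' ∈ 𝒟) => (hfat D' hD').2.2
  set S := {D' ∈ 𝒟 | (D' ∩ closedBall c β).Nonempty}
  have hS_balls : ∀ D' ∈ S, closedBall (ctr D') 1 ⊆ closedBall c (2 * β + 1) := by
    intro D' hD'
    obtain ⟨hD'𝒟, y, hyD', hyc⟩ := mem_filter.mp hD'
    have hdist : dist (ctr D') c ≤ 2 * β := by
      linarith [dist_triangle (ctr D') y c, mem_closedBall'.mp (hsub_ctr D' hD'𝒟 hyD'),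
        mem_closedBall.mp hyc]
    exact closedBall_subset_closedBall' (by linarith)
  have hS_ply : ∀ y, #{D' ∈ S | y ∈ closedBall (ctr D') 1} ≤ Δ := by
    intro y
    calc #{D' ∈ S | y ∈ closedBall (ctr D') 1} ≤ #{D' ∈ 𝒟 | y ∈ D'} := by
          refine card_le_card fun D' hD' => ?_
          simp only [S, mem_filter] at hD' ⊢
          exact ⟨hD'.1.1, hctr_sub D' hD'.1.1 hD'.2⟩
      _ ≤ Δ := by simpa [← Set.ncard_coe_finset, coe_filter] using hply y
  refine ⟨S, filter_subset _ _, ?_, ?_⟩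
  · simpa [finrank_euclideanSpace_fin] using
      card_le_pow_finrank_mul_of_closedBall_subset (by linarith) hS_balls hS_ply
  · exact ((convex_closedBall c β).isPathConnected ⟨p, hDc hp⟩).joinedIn p (hDc hp) q (hDc hq)
      |>.mono (subset_compl_sUnion_sdiff_filter_inter_nonempty 𝒟 _)
end
end
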